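/- arXiv:math/0506274 — 6 statements merged into one kernel-verified Lean document; each statement's English description precedes it below -/
import Mathlib

section
/- For a=1, b=0 and positive integer l: ∑_{m≥0} ∑_{k≥0} h_{m-2k}({1}^{k+1},{q}^{k}) (q^l/[l]²)^k z^m = ([l]²/[2l]) ( 1/([l]-[l+1]z) + q^l/([l]-q[l-1]z) ) as formal power series in z over ℚ(q). -/
/-- `hh q r s n` is the complete homogeneous symmetric function `h_n({1}^r, {q}^s)`. -/
noncomputable def hh {K : Type*} [CommSemiring K] (q : K) (r s : ℕ) (n : ℕ) : K :=
  PowerSeries.coeff n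
    ((PowerSeries.mk fun _ => (1 : K)) ^ r * (PowerSeries.mk fun k => q ^ k) ^ s)

/-- The q-integer `[n] = (1-q^n)/(1-q)`. -/
noncomputable def qint {K : Type*} [Field K] (q : K) (n : ℕ) : K := (1 - q ^ n) / (1 - q)

/-!
Since `h_n({1}^{k+1}, {q}^k)` is the `z^n`-coefficient of `(1-z)^{-k-1} (1-qz)^{-k}`, the
double sum is the geometric series
`∑_k c^k z^{2k} (1-z)^{-k-1} (1-qz)^{-k} = (1-qz) / ((1-z)(1-qz) - c z²)`, with `c = q^l/[l]²`.
For this `c` the denominator times `[l]²` factors as `([l] - [l+1] z)([l] - q[l-1] z)`, and the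
partial fractions come from `([l] - q[l-1] z) + q^l ([l] - [l+1] z) = [2l] (1 - q z)`.
-/

open PowerSeries Finset

section QInt

variable {K : Type*} [Field K] {q : K}

-- At `q = 1` the junk value `x / 0 = 0` makes every `qint q n` vanish.
theorem ne_one_of_qint_ne_zero {n : ℕ} (h : qint q n ≠ 0) : q ≠ 1 := by
  rintro rfl
  simp [qint] at h

theorem ne_zero_of_qint_ne_zero {n : ℕ} (h : qint q n ≠ 0) : n ≠ 0 := by
  rintro rfl
  simp [qint] at h

theorem one_sub_mul_qint (hq : q ≠ 1) (n : ℕ) : (1 - q) * qint q n = 1 - q ^ n :=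
  mul_div_cancel₀ _ (sub_ne_zero.2 hq.symm)

theorem qint_succ (hq : q ≠ 1) (n : ℕ) : qint q (n + 1) = qint q n + q ^ n := by
  have h := sub_ne_zero.2 hq.symm
  simp only [qint]
  field_simp
  ring

theorem q_mul_qint_sub_one (hq : q ≠ 1) {n : ℕ} (hn : n ≠ 0) :
    q * qint q (n - 1) = qint q n - 1 := by
  obtain ⟨n, rfl⟩ := Nat.exists_eq_succ_of_ne_zero hn
  have h := sub_ne_zero.2 hq.symm
  simp only [Nat.succ_sub_one, qint, pow_succ]
  field_simp
  ring

theorem qint_two_mul (hq : q ≠ 1) (n : ℕ) : qint q (2 * n) = qint q n * (1 + q ^ n) := by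
  have h := sub_ne_zero.2 hq.symm
  simp only [qint]
  field_simp
  ring

end QInt

namespace PowerSeries

variable {K : Type*} [Field K]

theorem mk_pow_mul_one_sub_C_mul_X (q : K) : (mk fun n => q ^ n) * (1 - C q * X) = 1 := by
  simpa [rescale_mk, rescale_X] using congrArg (rescale q) (mk_one_mul_one_sub_eq_one K)

theorem coeff_mul_inv_one_sub {φ ψ : K⟦X⟧} (hψ : constantCoeff ψ = 0) (m : ℕ) :
    coeff m (φ * (1 - ψ)⁻¹) = ∑ k ∈ range (m + 1), coeff m (φ * ψ ^ k) := by
  have hinv : (1 - ψ) * (1 - ψ)⁻¹ = 1 := PowerSeries.mul_inv_cancel _ (by simp [hψ])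
  have hgeom : φ * (1 - ψ)⁻¹ =
      φ * ∑ k ∈ range (m + 1), ψ ^ k + φ * (1 - ψ)⁻¹ * ψ ^ (m + 1) := by
    linear_combination (φ * ∑ k ∈ range (m + 1), ψ ^ k) * hinv +
      φ * (1 - ψ)⁻¹ * geom_sum_mul ψ (m + 1)
  have htail : X ^ (m + 1) ∣ φ * (1 - ψ)⁻¹ * ψ ^ (m + 1) :=
    dvd_mul_of_dvd_right (pow_dvd_pow_of_dvd (X_dvd_iff.2 hψ) _) _
  rw [hgeom, map_add, X_pow_dvd_iff.1 htail m m.lt_succ_self, add_zero, mul_sum, map_sum]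

theorem inv_add_mul_inv_mul_mul {φ ψ : K⟦X⟧} (hφ : constantCoeff φ ≠ 0)
    (hψ : constantCoeff ψ ≠ 0) (a : K⟦X⟧) :
    (φ⁻¹ + a * ψ⁻¹) * (φ * ψ) = ψ + a * φ := by
  linear_combination
    ψ * PowerSeries.inv_mul_cancel _ hφ + a * φ * PowerSeries.inv_mul_cancel _ hψ

theorem coeff_mk_one_mul_pow (q c : K) (k m : ℕ) :
    coeff m (mk 1 * (C c * X ^ 2 * mk 1 * mk fun n => q ^ n) ^ k) =
      if 2 * k ≤ m then c ^ k * hh q (k + 1) k (m - 2 * k) else 0 := by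
  have h : (mk 1 : K⟦X⟧) * (C c * X ^ 2 * mk 1 * mk fun n => q ^ n) ^ k =
      C (c ^ k) * (X ^ (2 * k) * (mk 1 ^ (k + 1) * (mk fun n => q ^ n) ^ k)) := by
    rw [map_pow, pow_mul]
    ring
  rw [h, coeff_C_mul, coeff_X_pow_mul', mul_ite, mul_zero]
  rfl

theorem mk_sum_hh_eq (q c : K) :
    (mk fun m => ∑ k ∈ range (m / 2 + 1), c ^ k * hh q (k + 1) k (m - 2 * k)) =
      mk 1 * (1 - C c * X ^ 2 * mk 1 * mk fun n => q ^ n)⁻¹ := by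
  ext m
  rw [coeff_mk, coeff_mul_inv_one_sub (by simp) m]
  simp only [coeff_mk_one_mul_pow, ← sum_filter]
  congr 1
  ext k
  simp only [mem_range, mem_filter]
  omega

theorem mk_sum_hh_mul (q c : K) :
    (mk fun m => ∑ k ∈ range (m / 2 + 1), c ^ k * hh q (k + 1) k (m - 2 * k)) *
      ((1 - X) * (1 - C q * X) - C c * X ^ 2) = 1 - C q * X := by
  set W : K⟦X⟧ := C c * X ^ 2 * mk 1 * mk fun n => q ^ n
  have hU := mk_one_mul_one_sub_eq_one K
  have hV := mk_pow_mul_one_sub_C_mul_X q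
  have hW : (1 - W) * (1 - W)⁻¹ = 1 := PowerSeries.mul_inv_cancel _ (by simp [W])
  have hden : (1 - X) * (1 - C q * X) - C c * X ^ 2 = (1 - W) * ((1 - X) * (1 - C q * X)) := by
    linear_combination (C c * X ^ 2 * (mk fun n => q ^ n) * (1 - C q * X)) * hU + C c * X ^ 2 * hV
  rw [mk_sum_hh_eq, hden]
  linear_combination (mk 1 * (1 - X) * (1 - C q * X)) * hW + (1 - C q * X) * hU

end PowerSeries

section QIntFactors

variable {K : Type*} [Field K] {q : K} {l : ℕ}

theorem qint_factors_mul (hq : q ≠ 1) (hl : l ≠ 0) (hL : qint q l ≠ 0) :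
    (C (qint q l) - C (qint q (l + 1)) * X) * (C (qint q l) - C (q * qint q (l - 1)) * X) =
      C (qint q l ^ 2) * ((1 - X) * (1 - C q * X) - C (q ^ l / qint q l ^ 2) * X ^ 2) := by
  have hc : qint q l ^ 2 * (q ^ l / qint q l ^ 2) = q ^ l := by field_simp
  have E := congrArg C (one_sub_mul_qint hq l)
  have Ec := congrArg C hc
  rw [qint_succ hq, q_mul_qint_sub_one hq hl]
  simp only [map_add, map_sub, map_mul, map_one, map_pow] at E Ec ⊢
  linear_combination (C (qint q l) * X ^ 2 - C (qint q l) * X) * E + X ^ 2 * Ec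

theorem qint_factors_add (hq : q ≠ 1) (hl : l ≠ 0) :
    (C (qint q l) - C (q * qint q (l - 1)) * X) +
        C (q ^ l) * (C (qint q l) - C (qint q (l + 1)) * X) =
      C (qint q (2 * l)) * (1 - C q * X) := by
  have E := congrArg C (one_sub_mul_qint hq l)
  rw [qint_succ hq, q_mul_qint_sub_one hq hl, qint_two_mul hq]
  simp only [map_add, map_sub, map_mul, map_one, map_pow] at E ⊢
  linear_combination -X * (1 + C q ^ l) * E

end QIntFactors

theorem hh_sum_case_a1_b0_general {K : Type*} [Field K] (q : K) (l : ℕ)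
    (hql : qint q l ≠ 0) (hq2l : qint q (2 * l) ≠ 0) :
    (PowerSeries.mk fun m =>
        ∑ k ∈ Finset.range (m / 2 + 1),
          (q ^ l / (qint q l) ^ 2) ^ k * hh q (k + 1) k (m - 2 * k)) =
      PowerSeries.C ((qint q l) ^ 2 / qint q (2 * l)) *
        ((PowerSeries.C (qint q l) - PowerSeries.C (qint q (l + 1)) * PowerSeries.X)⁻¹ +
          PowerSeries.C (q ^ l) *
            (PowerSeries.C (qint q l) -
              PowerSeries.C (q * qint q (l - 1)) * PowerSeries.X)⁻¹) := by
  have hq := ne_one_of_qint_ne_zero hql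
  have hl := ne_zero_of_qint_ne_zero hql
  set D₁ : K⟦X⟧ := C (qint q l) - C (qint q (l + 1)) * X
  set D₂ : K⟦X⟧ := C (qint q l) - C (q * qint q (l - 1)) * X
  have hD₁ : constantCoeff D₁ ≠ 0 := by simpa [D₁] using hql
  have hD₂ : constantCoeff D₂ ≠ 0 := by simpa [D₂] using hql
  refine mul_right_cancel₀ (mul_ne_zero (ne_zero_of_map hD₁) (ne_zero_of_map hD₂)) ?_
  calc _ = C (qint q l ^ 2) * (1 - C q * X) := by
        rw [qint_factors_mul hq hl hql, mul_left_comm, mk_sum_hh_mul]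
    _ = C (qint q l ^ 2 / qint q (2 * l)) * (D₂ + C (q ^ l) * D₁) := by
        rw [qint_factors_add hq hl, ← mul_assoc, ← map_mul, div_mul_cancel₀ _ hq2l]
    _ = _ := by rw [mul_assoc, inv_add_mul_inv_mul_mul hD₁ hD₂]

/-- Lemma, case a = 1, b = 0:
`∑_{m≥0} ∑_{k≥0} h_{m-2k}({1}^{k+1},{q}^{k}) (q^l/[l]²)^k z^m
  = ([l]²/[2l]) ( 1/([l]-[l+1]z) + q^l/([l]-q[l-1]z) )`
as formal power series in `z`. -/
theorem hh_sum_case_a1_b0 {K : Type*} [Field K] (q : K) (hq : q ≠ 1) (l : ℕ) (hl : 1 ≤ l)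
    (hql : qint q l ≠ 0) (hq2l : qint q (2 * l) ≠ 0) :
    (PowerSeries.mk fun m =>
        ∑ k ∈ Finset.range (m / 2 + 1),
          (q ^ l / (qint q l) ^ 2) ^ k * hh q (k + 1) k (m - 2 * k)) =
      PowerSeries.C ((qint q l) ^ 2 / qint q (2 * l)) *
        ((PowerSeries.C (qint q l) - PowerSeries.C (qint q (l + 1)) * PowerSeries.X)⁻¹ +
          PowerSeries.C (q ^ l) *
            (PowerSeries.C (qint q l) -
              PowerSeries.C (q * qint q (l - 1)) * PowerSeries.X)⁻¹) :=
  hh_sum_case_a1_b0_general q l hql hq2l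
end

section
/- Let X_l = [l][l+1]/q^l where [n] = (1-q^n)/(1-q). Then for all integers m ≥ 0 and l ≥ 1, X_l^{m+1} - X_{l-1}^{m+1} = ∑_{k≥0} h_{m-2k}({1}^{k+1},{q}^{k+1}) [2l] [l]^{2(m-k)} q^{-l(m-k+1)}. -/
/-- `X_l = [l][l+1]/q^l`. -/
noncomputable def Xl {K : Type*} [Field K] (q : K) (l : ℕ) : K :=
  qint q l * qint q (l + 1) / q ^ l

/-!
With `a = X_l`, `b = X_{l-1}` and `y = [l]²/q^l` one has `a + b = (1 + q) y`, `a b = q y² - y` and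
`a - b = [2l]/q^l`. Hence `(1 - aT)(1 - bT) = (1 - yT)(1 - qyT) - yT²`, and expanding the inverse
geometrically in `yT²`,
`∑ₘ hₘ(a, b) Tᵐ = ∑ₖ (yT²)ᵏ / ((1 - yT)(1 - qyT))^(k+1)`.
Comparing coefficients of `Tᵐ` gives `hₘ(a, b) = ∑ₖ h_{m-2k}({1}^(k+1), {q}^(k+1)) y^(m-k)`, and
`a^(m+1) - b^(m+1) = (a - b) hₘ(a, b)`.
-/

open PowerSeries Finset

namespace PowerSeries

variable {R : Type*} [CommRing R]

theorem one_sub_C_mul_X_mul_mk_pow (c : R) : (1 - C c * X) * mk (fun n => c ^ n) = 1 := by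
  have h := congrArg (rescale c) (mk_one_mul_one_sub_eq_one (S := R))
  rw [map_mul, map_sub, map_one, rescale_X, rescale_mk] at h
  simpa [mul_comm] using h

theorem coeff_mk_pow_mul_mk_pow (a b : R) (m : ℕ) :
    coeff m (mk (fun n => a ^ n) * mk (fun n => b ^ n)) =
      ∑ i ∈ range (m + 1), a ^ i * b ^ (m - i) := by
  rw [coeff_mul, Nat.sum_antidiagonal_eq_sum_range_succ_mk]
  simp

theorem coeff_C_mul_X_pow_mul (c : R) (j m : ℕ) (f : R⟦X⟧) :
    coeff m (C c * X ^ j * f) = if j ≤ m then c * coeff (m - j) f else 0 := by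
  rw [mul_assoc, coeff_C_mul, coeff_X_pow_mul']
  split_ifs <;> simp

noncomputable def hhSeries (q : R) (r : ℕ) : R⟦X⟧ :=
  (mk fun _ => 1) ^ r * (mk fun k => q ^ k) ^ r

theorem coeff_hhSeries (q : R) (r n : ℕ) : coeff n (hhSeries q r) = hh q r r n := rfl

theorem mul_hhSeries_succ (q : R) (r : ℕ) :
    (1 - X) * (1 - C q * X) * hhSeries q (r + 1) = hhSeries q r := by
  have h1 : (1 - X) * mk (fun _ => (1 : R)) = 1 := by
    simpa using one_sub_C_mul_X_mul_mk_pow (1 : R)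
  calc (1 - X) * (1 - C q * X) * hhSeries q (r + 1)
      = ((1 - X) * mk fun _ => 1) * ((1 - C q * X) * mk fun k => q ^ k) * hhSeries q r := by
        rw [hhSeries, hhSeries]; ring
    _ = hhSeries q r := by rw [h1, one_sub_C_mul_X_mul_mk_pow, one_mul, one_mul]

theorem mul_rescale_hhSeries_succ (q y : R) (r : ℕ) :
    (1 - C y * X) * (1 - C (q * y) * X) * rescale y (hhSeries q (r + 1)) =
      rescale y (hhSeries q r) := by
  have hC : rescale y (C q) = C q := by
    ext n
    rcases n with _ | n <;> simp [coeff_C]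
  rw [← mul_hhSeries_succ q r]
  simp only [map_mul, map_sub, map_one, rescale_X, hC]
  ring

theorem mul_sum_rescale_hhSeries (q y : R) (N : ℕ) :
    ((1 - C y * X) * (1 - C (q * y) * X) - C y * X ^ 2) *
        ∑ k ∈ range N, (C y * X ^ 2) ^ k * rescale y (hhSeries q (k + 1)) =
      1 - (C y * X ^ 2) ^ N * rescale y (hhSeries q N) := by
  set f : ℕ → R⟦X⟧ := fun k => (C y * X ^ 2) ^ k * rescale y (hhSeries q k)
  have hstep (k : ℕ) : ((1 - C y * X) * (1 - C (q * y) * X) - C y * X ^ 2) *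
      ((C y * X ^ 2) ^ k * rescale y (hhSeries q (k + 1))) = f k - f (k + 1) := by
    simp only [f, ← mul_rescale_hhSeries_succ q y k]
    ring
  have hf0 : f 0 = 1 := by simp [f, hhSeries]
  rw [mul_sum, sum_congr rfl fun k _ => hstep k, sum_range_sub', hf0]

end PowerSeries

theorem sum_pow_mul_pow_eq_sum_hh {R : Type*} [CommRing R] (q y a b : R)
    (hsum : a + b = (1 + q) * y) (hprod : a * b = q * y ^ 2 - y) (m : ℕ) :
    ∑ i ∈ range (m + 1), a ^ i * b ^ (m - i) =
      ∑ k ∈ range (m / 2 + 1), hh q (k + 1) (k + 1) (m - 2 * k) * y ^ (m - k) := by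
  set N := m / 2 + 1
  set E : R⟦X⟧ := PowerSeries.mk (fun n => a ^ n) * PowerSeries.mk (fun n => b ^ n)
  set F : R⟦X⟧ := ∑ k ∈ range N, (C y * X ^ 2) ^ k * rescale y (hhSeries q (k + 1))
  have hD : (1 - C a * X) * (1 - C b * X) =
      (1 - C y * X) * (1 - C (q * y) * X) - C y * X ^ 2 := by
    have : (1 - C a * X) * (1 - C b * X) = 1 - C (a + b) * X + C (a * b) * X ^ 2 := by
      simp only [map_add, map_mul]; ring
    rw [this, hsum, hprod]
    simp only [map_add, map_sub, map_mul, map_pow, map_one]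
    ring
  have hE : (1 - C a * X) * (1 - C b * X) * E = 1 := by
    calc (1 - C a * X) * (1 - C b * X) * E
        = ((1 - C a * X) * PowerSeries.mk fun n => a ^ n) *
            ((1 - C b * X) * PowerSeries.mk fun n => b ^ n) := by ring
      _ = 1 := by rw [one_sub_C_mul_X_mul_mk_pow, one_sub_C_mul_X_mul_mk_pow, one_mul]
  have hF : F = E - C (y ^ N) * X ^ (2 * N) * (rescale y (hhSeries q N) * E) := by
    calc F = (1 - C a * X) * (1 - C b * X) * E * F := by rw [hE, one_mul]
      _ = E * (1 - (C y * X ^ 2) ^ N * rescale y (hhSeries q N)) := by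
        rw [← mul_sum_rescale_hhSeries, ← hD]; ring
      _ = _ := by rw [mul_pow, ← pow_mul, map_pow]; ring
  have hcoeff := congrArg (coeff m) hF
  rw [map_sub, coeff_C_mul_X_pow_mul, if_neg (by omega), sub_zero,
    coeff_mk_pow_mul_mk_pow] at hcoeff
  rw [← hcoeff, map_sum]
  refine sum_congr rfl fun k hk => ?_
  have hk : 2 * k ≤ m := by rw [mem_range] at hk; omega
  rw [mul_pow, ← pow_mul, ← map_pow, coeff_C_mul_X_pow_mul, if_pos hk, coeff_rescale,
    coeff_hhSeries, ← mul_assoc, ← pow_add, show k + (m - 2 * k) = m - k by omega, mul_comm]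

/-- for `m ≥ 0` and `l ≥ 1`,
`X_l^{m+1} - X_{l-1}^{m+1} = ∑_{k≥0} h_{m-2k}({1}^{k+1},{q}^{k+1}) [2l] [l]^{2(m-k)} q^{-l(m-k+1)}`;
the sum is finite, over `0 ≤ k ≤ ⌊m/2⌋`. -/
theorem Xl_pow_sub {K : Type*} [Field K] (q : K) (hq0 : q ≠ 0) (hq1 : q ≠ 1)
    (m l : ℕ) (hl : 1 ≤ l) :
    Xl q l ^ (m + 1) - Xl q (l - 1) ^ (m + 1) =
      ∑ k ∈ Finset.range (m / 2 + 1),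
        hh q (k + 1) (k + 1) (m - 2 * k) * qint q (2 * l) * qint q l ^ (2 * (m - k)) *
          (q ^ (l * (m - k + 1)))⁻¹ := by
  obtain ⟨n, rfl⟩ : ∃ n, l = n + 1 := ⟨l - 1, by omega⟩
  have hq : (1 : K) - q ≠ 0 := sub_ne_zero.mpr hq1.symm
  set y := qint q (n + 1) ^ 2 / q ^ (n + 1)
  have hsum : Xl q (n + 1) + Xl q n = (1 + q) * y := by
    simp only [y, Xl, qint]; field_simp; ring
  have hprod : Xl q (n + 1) * Xl q n = q * y ^ 2 - y := by
    simp only [y, Xl, qint]; field_simp; ring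
  have hdiff : Xl q (n + 1) - Xl q n = qint q (2 * (n + 1)) / q ^ (n + 1) := by
    simp only [Xl, qint]; field_simp; ring
  rw [Nat.add_sub_cancel, ← geom_sum₂_mul, Nat.add_sub_cancel,
    sum_pow_mul_pow_eq_sum_hh q y _ _ hsum hprod, hdiff, sum_mul]
  refine sum_congr rfl fun k _ => ?_
  rw [div_pow, ← pow_mul, ← pow_mul]
  field_simp
  ring
end

section
/- The k×k determinant P_{m,k}(q) = det_{0≤i,j≤k-1}( h_{m-k-i+2j-1}({1,q}^{i-j+2}) ) is a palindromic (symmetric) polynomial in q: if P_{m,k}(q) = ∑ a_i q^i has degree d, then a_i = a_{d-i} for all i. -/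
/-- `h_n({1}^r,{q}^s)` with integer arguments, zero when `r < 0`, `s < 0` or `n < 0`. -/
noncomputable def hz {K : Type*} [CommSemiring K] (q : K) (r s n : ℤ) : K :=
  if 0 ≤ r ∧ 0 ≤ s ∧ 0 ≤ n then hh q r.toNat s.toNat n.toNat else 0

/-- The q-Faulhaber coefficient
`P_{m,k}(q) = det_{0≤i,j≤k-1}( h_{m-k-i+2j-1}({1,q}^{i-j+2}) )`, over `ℤ[q]`. -/
noncomputable def Pdet (m k : ℕ) : Polynomial ℤ :=
  Matrix.det (Matrix.of fun i j : Fin k =>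
    hz (Polynomial.X : Polynomial ℤ) ((i : ℤ) - j + 2) ((i : ℤ) - j + 2)
      ((m : ℤ) - k - i + 2 * j - 1))

/-!
The entries are palindromic: by homogeneity and symmetry of `h_n`,
`h_n({1,q}^r) = q^n h_n({1,q⁻¹}^r)`. Over Laurent polynomials the substitution `q ↦ q⁻¹`
therefore multiplies entry `(i, j)` by `q^i · q^(1-m+k-2j)`, a rescaling of rows and columns,
so `P(q⁻¹) = q^d P(q)` for an explicit `d`. This is the claimed symmetry about the degree once
`P(0) ≠ 0`. At `q = 0` the matrix is the Hessenberg matrix `(C(m-k+j, i+1-j))`. Laplace expansion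
along its first row gives a recursion that `c(y) - y c(y)² = 1`, `c` the Catalan series, solves:
the determinant is the ballot number `[y^k] c(y)^(m-k)`, positive because `k < m`.
-/

open Finset

section Laurent

open Polynomial LaurentPolynomial

theorem LaurentPolynomial.coeff_T_mul {R : Type*} [Semiring R] (n m : ℤ) (f : R[T;T⁻¹]) :
    (T n * f).coeff m = f.coeff (m - n) := by
  rw [T, AddMonoidAlgebra.coeff_single_mul_apply, one_mul, neg_add_eq_sub]

theorem LaurentPolynomial.prod_T {R : Type*} [CommSemiring R] {ι : Type*} (s : Finset ι)
    (u : ι → ℤ) : ∏ i ∈ s, (T (u i) : R[T;T⁻¹]) = T (∑ i ∈ s, u i) := by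
  simp only [T, AddMonoidAlgebra.prod_single, prod_const_one]

theorem Polynomial.coeff_toLaurent_natCast {R : Type*} [Semiring R] (p : R[X]) (n : ℕ) :
    (toLaurent p).coeff n = p.coeff n := by
  rw [coeff_toLaurent, show (n : ℤ) = Nat.castEmbedding n from rfl,
    Finsupp.mapDomain_apply Nat.castEmbedding.injective, toFinsupp_apply]

theorem Polynomial.coeff_toLaurent_of_neg {R : Type*} [Semiring R] (p : R[X]) {n : ℤ}
    (hn : n < 0) : (toLaurent p).coeff n = 0 := by
  rw [coeff_toLaurent]
  apply Finsupp.mapDomain_of_notMem_range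
  rintro ⟨k, rfl⟩
  exact (Int.natCast_nonneg k).not_gt hn

theorem LaurentPolynomial.invert_det {R : Type*} [CommRing R] {ι : Type*} [Fintype ι]
    [DecidableEq ι] (M : Matrix ι ι R[T;T⁻¹]) (u v : ι → ℤ)
    (h : ∀ i j, invert (M i j) = T (u i + v j) * M i j) :
    invert M.det = T (∑ i, u i + ∑ j, v j) * M.det := by
  let φ : R[T;T⁻¹] →+* R[T;T⁻¹] := invert (R := R)
  have hM : φ.mapMatrix M =
      Matrix.of fun i j => T (v j) * (Matrix.of fun i j => T (u i) * M i j) i j := by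
    refine Matrix.ext fun i j => ?_
    simp only [RingHom.mapMatrix_apply, Matrix.map_apply, Matrix.of_apply]
    rw [show φ (M i j) = invert (M i j) from rfl, h, T_add]
    ring
  have : invert M.det = _ := RingHom.map_det φ M
  rw [this, hM, Matrix.det_mul_row, Matrix.det_mul_column, prod_T, prod_T, T_add]
  ring

theorem Polynomial.coeff_eq_coeff_natDegree_sub_of_invert_toLaurent {R : Type*} [CommSemiring R]
    {p : R[X]} {d : ℤ} (h : invert (toLaurent p) = T d * toLaurent p) (h0 : p.coeff 0 ≠ 0)
    {i : ℕ} (hi : i ≤ p.natDegree) : p.coeff i = p.coeff (p.natDegree - i) := by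
  set L := toLaurent p
  have hsymm : ∀ z, L.coeff z = L.coeff (-d - z) := fun z => by
    have := congr_arg (fun L => L.coeff (-z)) h
    simp only [invert_apply, neg_neg, coeff_T_mul] at this
    rw [this]; congr 1; ring
  have hnonneg : ∀ z, L.coeff z ≠ 0 → 0 ≤ z := fun z hz => by
    by_contra! hneg
    exact hz (coeff_toLaurent_of_neg p hneg)
  have hlead : L.coeff p.natDegree ≠ 0 := by
    rw [coeff_toLaurent_natCast]
    exact leadingCoeff_ne_zero.mpr fun hp => h0 (by simp [hp])
  have hd : -d = p.natDegree := by
    have hle := hnonneg _ (hsymm p.natDegree ▸ hlead)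
    have hconst : L.coeff (-d) ≠ 0 := by
      rwa [← sub_zero (-d), ← hsymm 0, ← Nat.cast_zero, coeff_toLaurent_natCast]
    obtain ⟨e, he⟩ := Int.eq_ofNat_of_zero_le (hnonneg _ hconst)
    rw [he, coeff_toLaurent_natCast] at hconst
    have := le_natDegree_of_ne_zero hconst
    omega
  rw [← coeff_toLaurent_natCast, hsymm, hd, ← Nat.cast_sub hi, coeff_toLaurent_natCast]

end Laurent

section CompleteHomogeneous

open Polynomial LaurentPolynomial

theorem map_hh {K L : Type*} [CommSemiring K] [CommSemiring L] (φ : K →+* L) (q : K)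
    (r s n : ℕ) : φ (hh q r s n) = hh (φ q) r s n := by
  simp only [hh, ← PowerSeries.coeff_map, map_mul, map_pow]
  congr 4 <;> ext <;> simp

theorem map_hz {K L : Type*} [CommSemiring K] [CommSemiring L] (φ : K →+* L) (q : K)
    (r s n : ℤ) : φ (hz q r s n) = hz (φ q) r s n := by
  unfold hz
  split_ifs <;> simp [map_hh]

theorem hz_natCast {K : Type*} [CommSemiring K] (q : K) (r s n : ℕ) :
    hz q r s n = hh q r s n := by
  simp [hz]

theorem hh_eq_pow_mul_hh_of_mul_eq_one {K : Type*} [CommSemiring K] {q q' : K}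
    (h : q' * q = 1) (r s n : ℕ) : hh q r s n = q ^ n * hh q' s r n := by
  have hgeom : ∀ a : K, (PowerSeries.mk fun k => a ^ k) =
      PowerSeries.rescale a (PowerSeries.mk fun _ => 1) := fun a => by
    rw [PowerSeries.rescale_mk]; simp
  simp only [hh, hgeom, ← PowerSeries.coeff_rescale, map_mul, map_pow,
    PowerSeries.rescale_rescale, h, PowerSeries.rescale_one]
  rw [mul_comm]; rfl

theorem invert_toLaurent_hz {R : Type*} [CommRing R] (r n : ℤ) :
    invert (toLaurent (hz (X : R[X]) r r n)) =
      T (-n) * toLaurent (hz (X : R[X]) r r n) := by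
  let φ : R[X] →+* R[T;T⁻¹] := (invert (R := R) : R[T;T⁻¹] →+* R[T;T⁻¹]).comp toLaurent
  have hφ : invert (toLaurent (hz (X : R[X]) r r n)) = hz (T (-1)) r r n := by
    rw [show invert (toLaurent _) = φ (hz (X : R[X]) r r n) from rfl, map_hz]
    simp [φ]
  rw [hφ, map_hz, toLaurent_X]
  unfold hz
  split_ifs with hv
  · rw [hh_eq_pow_mul_hh_of_mul_eq_one (q := (T 1 : R[T;T⁻¹])) (q' := T (-1))
      (by rw [← T_add]; simp), T_pow, ← mul_assoc, ← T_add]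
    simp [show (n.toNat : ℤ) = n by omega]
  · simp

open PowerSeries in
theorem hh_zero_succ {K : Type*} [CommRing K] (r s n : ℕ) :
    hh (0 : K) (r + 1) s n = (r + n).choose r := by
  have h0 : (mk fun k => (0 : K) ^ k) = 1 := by
    ext k; rcases k with _ | k <;> simp
  rw [hh, h0, one_pow, mul_one, show (mk fun _ => (1 : K)) = PowerSeries.mk 1 from rfl,
    mk_one_pow_eq_mk_choose_add, coeff_mk]

theorem hh_zero_zero {K : Type*} [CommSemiring K] (n : ℕ) :
    hh (0 : K) 0 0 n = if n = 0 then 1 else 0 := by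
  simp [hh, PowerSeries.coeff_one]

end CompleteHomogeneous

section BinomialHessenberg

/-- `binomMatrix (m - k) 1 k` is the matrix of `P_{m,k}(0)`; the extra parameter `s` (which
shifts the first column) makes the family closed under the Laplace expansion along row `0`. -/
def binomEntry (c s : ℕ) : ℕ → ℕ → ℕ
  | i, 0 => c.choose (i + s)
  | i, j + 1 => if j ≤ i then (c + s + j).choose (i - j) else 0

def binomMatrix (c s k : ℕ) : Matrix (Fin k) (Fin k) ℤ :=
  Matrix.of fun i j => (binomEntry c s i j : ℤ)

theorem binomEntry_succ_succ (c s i j : ℕ) :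
    binomEntry c s (i + 1) (j + 1) = binomEntry (c + s) 1 i j := by
  rcases j with _ | j
  · simp [binomEntry]
  · simp only [binomEntry, Nat.add_le_add_iff_right, Nat.add_sub_add_right]
    congr 2
    ring

theorem binomEntry_succ_zero (c s i : ℕ) :
    binomEntry c s (i + 1) 0 = binomEntry c (s + 1) i 0 := by
  simp only [binomEntry]
  congr 1
  ring

theorem binomEntry_succ_add_two (c s i j : ℕ) :
    binomEntry c s (i + 1) (j + 2) = binomEntry c (s + 1) i (j + 1) := by
  simp only [binomEntry, Nat.add_le_add_iff_right, Nat.add_sub_add_right]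
  congr 2
  ring

theorem Matrix.det_succ_succ_of_row_zero_eq_zero {R : Type*} [CommRing R] {n : ℕ}
    (A : Matrix (Fin (n + 2)) (Fin (n + 2)) R) (h : ∀ j : Fin n, A 0 j.succ.succ = 0) :
    A.det = A 0 0 * (A.submatrix Fin.succ Fin.succ).det -
      A 0 1 * (A.submatrix Fin.succ (Fin.succAbove 1)).det := by
  rw [det_succ_row_zero, Fin.sum_univ_succ, Fin.sum_univ_succ]
  simp [h]
  ring

theorem det_binomMatrix_succ_succ (c s k : ℕ) :
    (binomMatrix c s (k + 2)).det =
      c.choose s * (binomMatrix (c + s) 1 (k + 1)).det - (binomMatrix c (s + 1) (k + 1)).det := by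
  have h0 : (binomMatrix c s (k + 2)).submatrix Fin.succ Fin.succ =
      binomMatrix (c + s) 1 (k + 1) :=
    Matrix.ext fun i j => by simp [binomMatrix, binomEntry_succ_succ]
  have h1 : (binomMatrix c s (k + 2)).submatrix Fin.succ (Fin.succAbove 1) =
      binomMatrix c (s + 1) (k + 1) := by
    refine Matrix.ext fun i j => ?_
    cases j using Fin.cases with
    | zero => simp [binomMatrix, binomEntry_succ_zero]
    | succ j =>
      rw [← Fin.succ_zero_eq_one, Matrix.submatrix_apply, Fin.succ_succAbove_succ]
      simp [binomMatrix, binomEntry_succ_add_two]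
  rw [Matrix.det_succ_succ_of_row_zero_eq_zero _ fun j => by simp [binomMatrix, binomEntry],
    h0, h1]
  simp [binomMatrix, binomEntry]

end BinomialHessenberg

section Catalan

open PowerSeries

theorem catalan_pos (n : ℕ) : 0 < catalan n :=
  Nat.pos_of_mul_pos_left ((succ_mul_catalan_eq_centralBinom n).symm ▸ n.centralBinom_pos)

theorem coeff_catalanSeries_pow_succ_pos (c n : ℕ) :
    0 < coeff n (catalanSeries ^ (c + 1)) := by
  induction c with
  | zero => simpa using catalan_pos n
  | succ c ih =>
    rw [pow_succ, coeff_mul]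
    refine sum_pos' (fun _ _ => Nat.zero_le _) ⟨(n, 0), by simp, ?_⟩
    simpa [catalan_zero] using ih

noncomputable def catalanSeriesInt : PowerSeries ℤ := map (Nat.castRingHom ℤ) catalanSeries

theorem catalanSeriesInt_sq_mul_X_add_one :
    catalanSeriesInt ^ 2 * X + 1 = catalanSeriesInt := by
  simpa [catalanSeriesInt] using
    congr_arg (map (Nat.castRingHom ℤ)) catalanSeries_sq_mul_X_add_one

theorem constantCoeff_catalanSeriesInt : constantCoeff catalanSeriesInt = 1 := by
  simp [catalanSeriesInt, ← coeff_zero_eq_constantCoeff_apply, coeff_map]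

/-- The binomial expansion of `(C - X C²)^c = 1`, `C` the Catalan series. -/
theorem sum_choose_mul_neg_X_pow_mul_catalanSeriesInt_pow (c : ℕ) :
    ∑ v ∈ range (c + 1), (c.choose v : PowerSeries ℤ) * (-X) ^ v * catalanSeriesInt ^ (c + v) =
      1 := by
  have h := add_pow (-X * catalanSeriesInt ^ 2) catalanSeriesInt c
  rw [show -X * catalanSeriesInt ^ 2 + catalanSeriesInt = 1 by
    linear_combination -catalanSeriesInt_sq_mul_X_add_one, one_pow] at h
  rw [h]
  refine sum_congr rfl fun v hv => ?_
  rw [mem_range] at hv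
  rw [mul_pow, ← pow_mul, show c + v = 2 * v + (c - v) by omega, pow_add]
  ring

/-- The generating function `∑ₖ det (binomMatrix c s (k + 1)) Xᵏ`, found by unrolling
`det_binomMatrix_succ_succ` in `s`. -/
noncomputable def binomDetSeries (c s : ℕ) : PowerSeries ℤ :=
  ∑ u ∈ range (c + 1),
    ((c.choose (s + u) : ℕ) : PowerSeries ℤ) * (-X) ^ u * catalanSeriesInt ^ (c + s + u)

theorem binomDetSeries_add_X_mul (c s : ℕ) :
    binomDetSeries c s + X * binomDetSeries c (s + 1) =
      (c.choose s : PowerSeries ℤ) * catalanSeriesInt ^ (c + s) := by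
  rw [binomDetSeries, binomDetSeries, sum_range_succ', mul_sum, sum_range_succ,
    Nat.choose_eq_zero_of_lt (show c < s + 1 + c by omega)]
  have hshift : ∀ u ∈ range c,
      X * (((c.choose (s + 1 + u) : ℕ) : PowerSeries ℤ) * (-X) ^ u *
        catalanSeriesInt ^ (c + (s + 1) + u)) =
      -(((c.choose (s + (u + 1)) : ℕ) : PowerSeries ℤ) * (-X) ^ (u + 1) *
        catalanSeriesInt ^ (c + s + (u + 1))) := fun u _ => by
    rw [show s + 1 + u = s + (u + 1) by ring, show c + (s + 1) + u = c + s + (u + 1) by ring]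
    ring
  rw [sum_congr rfl hshift, sum_neg_distrib]
  simp

theorem X_mul_binomDetSeries_one (c : ℕ) :
    X * binomDetSeries c 1 = catalanSeriesInt ^ c - 1 := by
  have h := binomDetSeries_add_X_mul c 0
  rw [binomDetSeries] at h
  simp only [zero_add, add_zero, Nat.choose_zero_right, Nat.cast_one, one_mul,
    sum_choose_mul_neg_X_pow_mul_catalanSeriesInt_pow] at h
  linear_combination h

theorem coeff_succ_catalanSeriesInt_pow (c n : ℕ) :
    coeff (n + 1) (catalanSeriesInt ^ c) = coeff n (binomDetSeries c 1) := by
  rw [← coeff_succ_X_mul n (binomDetSeries c 1), X_mul_binomDetSeries_one, map_sub, coeff_one,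
    if_neg n.succ_ne_zero, sub_zero]

theorem det_binomMatrix_eq_coeff_binomDetSeries (k c s : ℕ) :
    (binomMatrix c s (k + 1)).det = coeff k (binomDetSeries c s) := by
  induction k generalizing c s with
  | zero =>
    have h := congr_arg (coeff 0) (binomDetSeries_add_X_mul c s)
    rw [map_add, coeff_zero_X_mul, add_zero, ← map_natCast (C (R := ℤ)), coeff_C_mul,
      coeff_zero_eq_constantCoeff_apply, coeff_zero_eq_constantCoeff_apply, map_pow] at h
    simp [binomMatrix, binomEntry, h, constantCoeff_catalanSeriesInt]
  | succ k ih =>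
    have h := congr_arg (coeff (k + 1)) (binomDetSeries_add_X_mul c s)
    rw [det_binomMatrix_succ_succ, ih, ih]
    rw [map_add, coeff_succ_X_mul, ← map_natCast (C (R := ℤ)), coeff_C_mul,
      coeff_succ_catalanSeriesInt_pow] at h
    linear_combination -h

theorem det_binomMatrix_one_pos {c : ℕ} (hc : c ≠ 0) (k : ℕ) : 0 < (binomMatrix c 1 k).det := by
  rcases k with _ | k
  · simp
  · obtain ⟨c, rfl⟩ := Nat.exists_eq_add_one_of_ne_zero hc
    rw [det_binomMatrix_eq_coeff_binomDetSeries, ← coeff_succ_catalanSeriesInt_pow,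
      catalanSeriesInt, ← map_pow, coeff_map]
    exact Int.natCast_pos.mpr (coeff_catalanSeries_pow_succ_pos c (k + 1))

end Catalan

section Pdet

open Polynomial LaurentPolynomial

theorem hz_zero_eq_binomEntry (c i j : ℕ) :
    hz (0 : ℤ) ((i : ℤ) - j + 2) ((i : ℤ) - j + 2) ((c : ℤ) - i + 2 * j - 1) =
      binomEntry c 1 i j := by
  rcases j with _ | j
  · rw [binomEntry]
    by_cases h : i + 1 ≤ c
    · rw [show (i : ℤ) - (0 : ℕ) + 2 = ((i + 1 + 1 : ℕ) : ℤ) by push_cast; ring,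
        show (c : ℤ) - i + 2 * (0 : ℕ) - 1 = ((c - (i + 1) : ℕ) : ℤ) by push_cast; omega,
        hz_natCast, hh_zero_succ]
      congr 2; omega
    · rw [Nat.choose_eq_zero_of_lt (by omega)]
      simp [hz]; omega
  · rw [binomEntry]
    split_ifs with h
    · by_cases h' : i ≤ c + 2 * j + 1
      · rw [show (i : ℤ) - (j + 1 : ℕ) + 2 = ((i - j + 1 : ℕ) : ℤ) by push_cast; omega,
          show (c : ℤ) - i + 2 * (j + 1 : ℕ) - 1 = ((c + 2 * j + 1 - i : ℕ) : ℤ) by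
            push_cast; omega,
          hz_natCast, hh_zero_succ]
        congr 2; omega
      · rw [Nat.choose_eq_zero_of_lt (by omega)]
        simp [hz]; omega
    · by_cases h' : j = i + 1
      · subst h'
        rw [show (i : ℤ) - (i + 1 + 1 : ℕ) + 2 = ((0 : ℕ) : ℤ) by push_cast; ring,
          show (c : ℤ) - i + 2 * (i + 1 + 1 : ℕ) - 1 = ((c + i + 3 : ℕ) : ℤ) by push_cast; ring,
          hz_natCast, hh_zero_zero]
        simp
      · simp [hz]; omega

theorem invert_toLaurent_Pdet (m k : ℕ) :
    invert (toLaurent (Pdet m k)) =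
      T (∑ i : Fin k, (i : ℤ) + ∑ j : Fin k, (1 - m + k - 2 * j : ℤ)) * toLaurent (Pdet m k) := by
  rw [Pdet, RingHom.map_det]
  refine invert_det _ _ _ fun i j => ?_
  rw [RingHom.mapMatrix_apply, Matrix.map_apply, Matrix.of_apply, invert_toLaurent_hz]
  congr 2
  ring

theorem Pdet_coeff_zero {m k : ℕ} (hk : k ≤ m) :
    (Pdet m k).coeff 0 = (binomMatrix (m - k) 1 k).det := by
  rw [← constantCoeff_apply, Pdet, RingHom.map_det]
  congr 1
  refine Matrix.ext fun i j => ?_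
  rw [RingHom.mapMatrix_apply, Matrix.map_apply, Matrix.of_apply, map_hz, constantCoeff_apply,
    coeff_X_zero, binomMatrix, Matrix.of_apply, ← hz_zero_eq_binomEntry, Nat.cast_sub hk]

end Pdet

/-- `P_{m,k}(q)` is palindromic: if `d` is its degree then the
coefficients satisfy `a_i = a_{d-i}`. -/
theorem Pdet_coeff_symmetric (m k : ℕ) (hk : k < m) (i : ℕ)
    (hi : i ≤ (Pdet m k).natDegree) :
    (Pdet m k).coeff i = (Pdet m k).coeff ((Pdet m k).natDegree - i) :=
  Polynomial.coeff_eq_coeff_natDegree_sub_of_invert_toLaurent (invert_toLaurent_Pdet m k)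
    (by rw [Pdet_coeff_zero hk.le]; exact (det_binomMatrix_one_pos (by omega) k).ne') hi
end

section
/- For m ≥ 2, the determinants P_{m,m-1}(q) and P_{m,m-2}(q) are equal, where P_{m,k}(q) = det_{0≤i,j≤k-1}( h_{m-k-i+2j-1}({1,q}^{i-j+2}) ). -/
/-! When `k = m - 1` the first column of the matrix of `P_{m,k}` is `(h_0, h_{-1}, h_{-2}, …)ᵀ
= (1, 0, 0, …)ᵀ`, and deleting the first row and column of the matrix of `P_{m,k+1}` always
leaves the matrix of `P_{m,k}`. Expanding along the first column gives the identity. -/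

theorem Matrix.det_succ_of_column_zero {R : Type*} [CommRing R] {k : ℕ}
    (A : Matrix (Fin (k + 1)) (Fin (k + 1)) R) (hA : ∀ i ≠ 0, A i 0 = 0) :
    A.det = A 0 0 * (A.submatrix Fin.succ Fin.succ).det := by
  rw [Matrix.det_succ_column_zero, Finset.sum_eq_single 0]
  · simp
  · intro i _ hi
    rw [hA i hi, mul_zero, zero_mul]
  · simp

theorem hh_zero {K : Type*} [CommSemiring K] (q : K) (r s : ℕ) : hh q r s 0 = 1 := by
  simp [hh, PowerSeries.coeff_zero_eq_constantCoeff, PowerSeries.constantCoeff_mk]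

theorem hz_zero {K : Type*} [CommSemiring K] (q : K) {r s : ℤ} (hr : 0 ≤ r) (hs : 0 ≤ s) :
    hz q r s 0 = 1 := by
  simp [hz, hr, hs, hh_zero]

theorem hz_of_neg {K : Type*} [CommSemiring K] (q : K) (r s : ℤ) {n : ℤ} (hn : n < 0) :
    hz q r s n = 0 :=
  if_neg fun h => hn.not_ge h.2.2

noncomputable def pMatrix (m k : ℕ) : Matrix (Fin k) (Fin k) (Polynomial ℤ) :=
  Matrix.of fun i j => hz (Polynomial.X : Polynomial ℤ) ((i : ℤ) - j + 2) ((i : ℤ) - j + 2)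
    ((m : ℤ) - k - i + 2 * j - 1)

theorem Pdet_eq_det_pMatrix (m k : ℕ) : Pdet m k = (pMatrix m k).det := rfl

theorem pMatrix_submatrix_succ (m k : ℕ) :
    (pMatrix m (k + 1)).submatrix Fin.succ Fin.succ = pMatrix m k := by
  ext i j
  simp only [pMatrix, Matrix.submatrix_apply, Matrix.of_apply, Fin.val_succ]
  push_cast
  ring_nf

theorem pMatrix_column_zero (k : ℕ) (i : Fin (k + 1)) :
    pMatrix (k + 2) (k + 1) i 0 = if i = 0 then 1 else 0 := by
  have hidx : ((k + 2 : ℕ) : ℤ) - (k + 1 : ℕ) - i + 2 * ((0 : Fin (k + 1)) : ℕ) - 1 = -i := by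
    simp only [Fin.val_zero]; push_cast; ring
  simp only [pMatrix, Matrix.of_apply, hidx]
  split_ifs with hi
  · subst hi
    exact hz_zero _ (by norm_num) (by norm_num)
  · exact hz_of_neg _ _ _ (by have := Fin.pos_of_ne_zero hi; omega)

/-- for `m ≥ 2`, `P_{m,m-1}(q) = P_{m,m-2}(q)`. -/
theorem Pdet_top_eq (m : ℕ) (hm : 2 ≤ m) : Pdet m (m - 1) = Pdet m (m - 2) := by
  obtain ⟨k, rfl⟩ : ∃ k, m = k + 2 := ⟨m - 2, by omega⟩
  show Pdet (k + 2) (k + 1) = Pdet (k + 2) k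
  rw [Pdet_eq_det_pMatrix, Pdet_eq_det_pMatrix, Matrix.det_succ_of_column_zero,
    pMatrix_submatrix_succ, pMatrix_column_zero, if_pos rfl, one_mul]
  intro i hi
  rw [pMatrix_column_zero, if_neg hi]
end

section
/- With G_{m,k}(q) = det_{0≤i,j≤k-1}( g_{m-k+i+1, m-k+j}(q) ) where g_{k,m}(q) = h_{2m-k}({1}^{k-m+1},{q}^{k-m}) + h_{2m-k}({1}^{k-m},{q}^{k-m+1}), one has G_{m,m-1}(q) = 2·G_{m,m-2}(q) for all m ≥ 3. -/
/-- `g_{k,m}(q) = h_{2m-k}({1}^{k-m+1},{q}^{k-m}) + h_{2m-k}({1}^{k-m},{q}^{k-m+1})`. -/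
noncomputable def gP (k m : ℤ) : Polynomial ℤ :=
  hz (Polynomial.X : Polynomial ℤ) (k - m + 1) (k - m) (2 * m - k) +
    hz (Polynomial.X : Polynomial ℤ) (k - m) (k - m + 1) (2 * m - k)

/-- The q-Salié coefficient `G_{m,k}(q) = det_{0≤i,j≤k-1}( g_{m-k+i+1,m-k+j}(q) )`. -/
noncomputable def Gdet (m k : ℕ) : Polynomial ℤ :=
  Matrix.det (Matrix.of fun i j : Fin k =>
    gP ((m : ℤ) - k + i + 1) ((m : ℤ) - k + j))

theorem Matrix.det_succ_of_forall_column_zero_eq_zero {R : Type*} [CommRing R] {n : ℕ}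
    (A : Matrix (Fin (n + 1)) (Fin (n + 1)) R) (hA : ∀ i ≠ 0, A i 0 = 0) :
    A.det = A 0 0 * (A.submatrix Fin.succ Fin.succ).det := by
  rw [Matrix.det_succ_column_zero, Fin.sum_univ_succ]
  simp [hA]

theorem gP_eq_zero_of_lt {k m : ℤ} (h : 2 * m < k) : gP k m = 0 := by
  simp only [gP, hz]
  rw [if_neg (by omega), if_neg (by omega), add_zero]

theorem gP_two_one : gP 2 1 = 2 := by
  norm_num [gP, hz, hh_zero]

theorem Gdet_succ_eq_mul (m k : ℕ)
    (hcol : ∀ i : Fin (k + 1), i ≠ 0 → gP ((m : ℤ) - k + i) ((m : ℤ) - k - 1) = 0) :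
    Gdet m (k + 1) = gP ((m : ℤ) - k) ((m : ℤ) - k - 1) * Gdet m k := by
  have hminor : (Matrix.of fun i j : Fin (k + 1) =>
      gP ((m : ℤ) - (k + 1 : ℕ) + i + 1) ((m : ℤ) - (k + 1 : ℕ) + j)).submatrix Fin.succ Fin.succ =
      Matrix.of fun i j : Fin k => gP ((m : ℤ) - k + i + 1) ((m : ℤ) - k + j) := by
    ext i j : 1
    simp only [Matrix.submatrix_apply, Matrix.of_apply, Fin.val_succ]
    refine congrArg₂ gP ?_ ?_ <;> push_cast <;> ring
  rw [Gdet, Matrix.det_succ_of_forall_column_zero_eq_zero, hminor, Gdet]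
  · simp only [Matrix.of_apply, Fin.val_zero]
    congr 2 <;> push_cast <;> ring
  · intro i hi
    simp only [Matrix.of_apply, Fin.val_zero]
    convert hcol i hi using 2 <;> push_cast <;> ring

/-- for `m ≥ 3`, `G_{m,m-1}(q) = 2 G_{m,m-2}(q)`. -/
theorem Gdet_top_eq (m : ℕ) (hm : 3 ≤ m) : Gdet m (m - 1) = 2 * Gdet m (m - 2) := by
  obtain ⟨n, rfl⟩ : ∃ n, m = n + 3 := ⟨m - 3, by omega⟩
  have hcorner : gP (((n + 3 : ℕ) : ℤ) - (n + 1 : ℕ)) (((n + 3 : ℕ) : ℤ) - (n + 1 : ℕ) - 1) = 2 := by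
    convert gP_two_one using 2 <;> push_cast <;> ring
  have hcol (i : Fin (n + 2)) (hi : i ≠ 0) :
      gP (((n + 3 : ℕ) : ℤ) - (n + 1 : ℕ) + i) (((n + 3 : ℕ) : ℤ) - (n + 1 : ℕ) - 1) = 0 := by
    have hi_pos : (1 : ℤ) ≤ i := by exact_mod_cast Fin.pos_iff_ne_zero.mpr hi
    exact gP_eq_zero_of_lt (by push_cast; omega)
  rw [show n + 3 - 1 = n + 1 + 1 from rfl, Gdet_succ_eq_mul _ _ hcol, hcorner]
  rfl
end

section
/- The (m+1)×(m+1) lower triangular matrix A with entries A_{k,m'} = h_{2m'-k}({1,q}^{k-m'+1}) (indices 0 ≤ k, m' ≤ n) and the matrix B with entries B_{k,m'} = (-1)^{k-m'} ([m']!_q/[k+1]!_q) P_{k,k-m'}(q) are inverse to each other, where P_{m,j}(q) = det_{0≤i,l≤j-1}( h_{m-j-i+2l-1}({1,q}^{i-l+2}) ) and P_{m,0}(q) = 1. -/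
/-- The q-factorial `[k]! = [1][2]⋯[k]`. -/
noncomputable def qfac {K : Type*} [Field K] (q : K) (k : ℕ) : K :=
  ∏ i ∈ Finset.range k, qint q (i + 1)

/-- `P_{m,k}(q) = det_{0≤i,j≤k-1}( h_{m-k-i+2j-1}({1,q}^{i-j+2}) )`; `P_{m,0} = 1`. -/
noncomputable def PdetF {K : Type*} [Field K] (q : K) (m k : ℕ) : K :=
  Matrix.det (Matrix.of fun i j : Fin k =>
    hz q ((i : ℤ) - j + 2) ((i : ℤ) - j + 2) ((m : ℤ) - k - i + 2 * j - 1))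

/-! `A` is lower triangular with diagonal entries `A_{c,c} = [c+1]_q`, nonzero because `q` is not
a root of unity. A lower triangular `L` with invertible diagonal has the inverse
`(L⁻¹)_{k,j} = (-1)^{k-j} det L[j+1..k, j..k-1] / ∏_{c=j}^{k} L_{c,c}` (the cofactor of `L_{j,k}`
splits into blocks); this is verified directly, since Laplace expansion of `L[j+1..k, j..k-1]`
along its last row, which lies in row `k` of `L`, makes `∑_m L_{k,m} (L⁻¹)_{m,j}` vanish for
`k > j`. For `L = A` the block `A[j+1..k, j..k-1]` is the matrix defining `P_{k,k-j}`, and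
`∏_{c=j}^{k} [c+1]_q = [k+1]!_q / [j]!_q`, which turns the formula into `B`. -/

open Matrix Finset

section LowerTriangular

variable {K : Type*} [Field K]

lemma Fin.val_succAbove_eq_ite {n : ℕ} (l : Fin (n + 1)) (b : Fin n) :
    (l.succAbove b : ℕ) = if (b : ℕ) < l then (b : ℕ) else b + 1 := by
  rcases lt_or_ge (b : ℕ) l with h | h
  · rw [Fin.succAbove_of_castSucc_lt _ _ h, if_pos h, Fin.val_castSucc]
  · rw [Fin.succAbove_of_le_castSucc _ _ h, if_neg (not_lt.2 h), Fin.val_succ]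

noncomputable def subdiagonalMinor (f : ℕ → ℕ → K) (d j : ℕ) : K :=
  det (of fun a b : Fin d => f (j + 1 + a) (j + b))

lemma subdiagonalMinor_zero (f : ℕ → ℕ → K) (j : ℕ) : subdiagonalMinor f 0 j = 1 :=
  det_fin_zero

/-- Deleting column `l` of the block leaves a block lower triangular matrix. -/
lemma det_subdiagonalMinor_skipColumn (f : ℕ → ℕ → K) (hf : ∀ k m, k < m → f k m = 0)
    (j : ℕ) {l e : ℕ} (hle : l ≤ e) :
    det (of fun a b : Fin e => f (j + 1 + a) (j + if (b : ℕ) < l then (b : ℕ) else b + 1)) =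
      subdiagonalMinor f l j * ∏ c ∈ Ico (j + l + 1) (j + e + 1), f c c := by
  induction e, hle using Nat.le_induction with
  | base =>
    simp only [Fin.is_lt, if_true, Ico_self, prod_empty, mul_one]
    rfl
  | succ e hle ih =>
    rw [det_succ_column _ (Fin.last e), Fintype.sum_eq_single (Fin.last e)]
    · have hsub : (of fun a b : Fin (e + 1) =>
            f (j + 1 + a) (j + if (b : ℕ) < l then (b : ℕ) else b + 1)).submatrix
            (Fin.last e).succAbove (Fin.last e).succAbove =
          of fun a b : Fin e => f (j + 1 + a) (j + if (b : ℕ) < l then (b : ℕ) else b + 1) := by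
        ext a b
        simp
      rw [hsub, prod_Ico_succ_top (show j + l + 1 ≤ j + (e + 1) by omega), ih]
      simp only [of_apply, Fin.val_last, if_neg (show ¬ e < l by omega), ← two_mul,
        pow_mul, neg_one_sq, one_pow, one_mul, Nat.add_right_comm j 1 e, ← add_assoc]
      ring
    · intro a ha
      have : (a : ℕ) < e := Fin.val_lt_last ha
      simp [hf _ _ (show j + 1 + a < j + (e + 1) by omega), if_neg (show ¬ e < l by omega)]

lemma subdiagonalMinor_succ (f : ℕ → ℕ → K) (hf : ∀ k m, k < m → f k m = 0) (j e : ℕ) :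
    subdiagonalMinor f (e + 1) j = ∑ l ∈ range (e + 1),
      (-1) ^ (e + l) * f (j + e + 1) (j + l) * subdiagonalMinor f l j *
        ∏ c ∈ Ico (j + l + 1) (j + e + 1), f c c := by
  rw [subdiagonalMinor, det_succ_row _ (Fin.last e), ← Fin.sum_univ_eq_sum_range]
  refine Fintype.sum_congr _ _ fun l => ?_
  have hminor : (of fun a b : Fin (e + 1) => f (j + 1 + a) (j + b)).submatrix
      (Fin.last e).succAbove l.succAbove =
      of fun a b : Fin e => f (j + 1 + a) (j + if (b : ℕ) < l then (b : ℕ) else b + 1) := by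
    ext a b
    simp [Fin.val_succAbove_eq_ite]
  rw [hminor, det_subdiagonalMinor_skipColumn f hf j (Fin.is_le l)]
  simp only [of_apply, Fin.val_last, add_right_comm j 1 e]
  ring

lemma alternating_cofactor_sum_eq_zero (f : ℕ → ℕ → K) (hf : ∀ k m, k < m → f k m = 0)
    (j e : ℕ) :
    ∑ l ∈ range (e + 2), (-1) ^ l * f (j + e + 1) (j + l) * subdiagonalMinor f l j *
      ∏ c ∈ Ico (j + l + 1) (j + e + 2), f c c = 0 := by
  have hsign : ∀ l, (-1 : K) ^ l = (-1) ^ e * (-1) ^ (e + l) := fun l => by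
    rw [← pow_add, ← add_assoc, ← two_mul, pow_add, pow_mul, neg_one_sq, one_pow, one_mul]
  have hlower : ∑ l ∈ range (e + 1), (-1) ^ l * f (j + e + 1) (j + l) *
      subdiagonalMinor f l j * ∏ c ∈ Ico (j + l + 1) (j + e + 2), f c c =
      (-1) ^ e * f (j + e + 1) (j + e + 1) * subdiagonalMinor f (e + 1) j := by
    rw [subdiagonalMinor_succ f hf, mul_sum]
    refine sum_congr rfl fun l hl => ?_
    rw [show j + e + 2 = j + e + 1 + 1 from rfl,
      prod_Ico_succ_top (show j + l + 1 ≤ j + e + 1 by simp at hl; omega), hsign l]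
    ring
  rw [sum_range_succ, hlower, ← add_assoc j e 1, Ico_self, prod_empty, pow_succ]
  ring

noncomputable def triangularInv (f : ℕ → ℕ → K) (k j : ℕ) : K :=
  if j ≤ k then (-1) ^ (k - j) * subdiagonalMinor f (k - j) j / ∏ c ∈ Ico j (k + 1), f c c
  else 0

lemma sum_mul_triangularInv (f : ℕ → ℕ → K) (hf : ∀ k m, k < m → f k m = 0)
    (hdiag : ∀ c, f c c ≠ 0) (k j : ℕ) :
    ∑ m ∈ Ico j (k + 1), f k m * triangularInv f m j = if k = j then 1 else 0 := by
  have hprod_ne : ∀ a b, ∏ c ∈ Ico a b, f c c ≠ 0 := fun a b =>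
    prod_ne_zero_iff.2 fun c _ => hdiag c
  rcases lt_trichotomy k j with hkj | rfl | hjk
  · rw [Ico_eq_empty (by omega), sum_empty, if_neg hkj.ne]
  · simp [triangularInv, subdiagonalMinor_zero, hdiag k]
  obtain ⟨e, rfl⟩ : ∃ e, k = j + e + 1 := ⟨k - j - 1, by omega⟩
  rw [if_neg (by omega)]
  suffices h : (∑ m ∈ Ico j (j + e + 2), f (j + e + 1) m * triangularInv f m j) *
      ∏ c ∈ Ico j (j + e + 2), f c c = 0 from
    (mul_eq_zero.1 h).resolve_right (hprod_ne _ _)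
  rw [← alternating_cofactor_sum_eq_zero f hf j e, sum_mul, sum_Ico_eq_sum_range,
    show j + e + 2 - j = e + 2 by omega]
  refine sum_congr rfl fun l hl => ?_
  rw [triangularInv, if_pos (by omega), Nat.add_sub_cancel_left,
    ← prod_Ico_consecutive _ (show j ≤ j + l + 1 by omega)
      (show j + l + 1 ≤ j + e + 2 by simp at hl; omega)]
  field_simp [hprod_ne]

lemma mul_triangularInv (f : ℕ → ℕ → K) (hf : ∀ k m, k < m → f k m = 0)
    (hdiag : ∀ c, f c c ≠ 0) (N : ℕ) :
    (of fun k j : Fin N => f k j) * (of fun k j : Fin N => triangularInv f k j) = 1 := by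
  ext k j
  have h := sum_mul_triangularInv f hf hdiag k j
  simp only [Fin.val_inj] at h
  rw [mul_apply, one_apply, ← h]
  simp only [of_apply]
  rw [Fin.sum_univ_eq_sum_range (fun m => f k m * triangularInv f m j)]
  refine (sum_subset (fun m hm => ?_) fun m _ hm => ?_).symm
  · simp only [mem_Ico, mem_range] at hm ⊢
    omega
  · simp only [mem_Ico, not_and_or, not_le, not_lt] at hm
    rcases hm with hm | hm
    · simp [triangularInv, hm.not_ge]
    · simp [hf k m (by omega)]

end LowerTriangular

section Faulhaber

variable {K : Type*} [Field K]

noncomputable def faulhaberEntry (q : K) (k m : ℕ) : K :=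
  hz q ((k : ℤ) - m + 1) ((k : ℤ) - m + 1) (2 * (m : ℤ) - k)

lemma hh_one_one (q : K) (n : ℕ) : hh q 1 1 n = ∑ i ∈ range (n + 1), q ^ i := by
  rw [hh, pow_one, pow_one, PowerSeries.coeff_mul, Nat.sum_antidiagonal_eq_sum_range_succ_mk,
    ← sum_range_reflect]
  refine sum_congr rfl fun i hi => ?_
  simp [Nat.sub_sub_self (mem_range_succ_iff.1 hi)]

lemma faulhaberEntry_self {q : K} (hq : q ≠ 1) (c : ℕ) :
    faulhaberEntry q c c = qint q (c + 1) := by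
  have hq' : (1 : K) - q ≠ 0 := sub_ne_zero.2 hq.symm
  rw [faulhaberEntry, hz, if_pos (by omega), show ((c : ℤ) - c + 1).toNat = 1 by omega,
    show (2 * (c : ℤ) - c).toNat = c by omega, hh_one_one, geom_sum_eq hq, qint,
    div_eq_div_iff (sub_ne_zero.2 hq) hq']
  ring

lemma faulhaberEntry_of_lt (q : K) {k m : ℕ} (h : k < m) : faulhaberEntry q k m = 0 := by
  rw [faulhaberEntry, hz]
  split_ifs with hnonneg
  · rw [show ((k : ℤ) - m + 1).toNat = 0 by omega, hh, pow_zero, pow_zero, one_mul,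
      PowerSeries.coeff_one, if_neg (by omega)]
  · rfl

lemma PdetF_eq_subdiagonalMinor (q : K) {k m : ℕ} (h : m ≤ k) :
    PdetF q k (k - m) = subdiagonalMinor (faulhaberEntry q) (k - m) m := by
  rw [PdetF, subdiagonalMinor]
  congr 1
  ext a b
  simp only [of_apply, faulhaberEntry]
  congr 1 <;> push_cast [Nat.cast_sub h] <;> ring

lemma qfac_mul_prod_Ico (q : K) {k m : ℕ} (h : m ≤ k + 1) :
    qfac q m * ∏ c ∈ Ico m (k + 1), qint q (c + 1) = qfac q (k + 1) :=
  prod_range_mul_prod_Ico _ h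

lemma qint_ne_zero {q : K} (hq : ∀ c : ℕ, q ^ (c + 1) ≠ 1) (c : ℕ) : qint q (c + 1) ≠ 0 :=
  div_ne_zero (sub_ne_zero.2 (hq c).symm) (sub_ne_zero.2 (by simpa using (hq 0).symm))

lemma faulhaberEntry_self_ne_zero {q : K} (hq : ∀ c : ℕ, q ^ (c + 1) ≠ 1) (c : ℕ) :
    faulhaberEntry q c c ≠ 0 := by
  rw [faulhaberEntry_self (by simpa using hq 0)]
  exact qint_ne_zero hq c

lemma triangularInv_faulhaberEntry {q : K} (hq : ∀ c : ℕ, q ^ (c + 1) ≠ 1) (k m : ℕ) :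
    triangularInv (faulhaberEntry q) k m =
      if m ≤ k then (-1) ^ (k - m) * qfac q m / qfac q (k + 1) * PdetF q k (k - m) else 0 := by
  have hq1 : q ≠ 1 := by simpa using hq 0
  rw [triangularInv]
  split_ifs with h
  · have hqfac : qfac q m ≠ 0 := prod_ne_zero_iff.2 fun i _ => qint_ne_zero hq i
    have hprod : ∏ c ∈ Ico m (k + 1), qint q (c + 1) ≠ 0 :=
      prod_ne_zero_iff.2 fun c _ => qint_ne_zero hq c
    rw [PdetF_eq_subdiagonalMinor q h, prod_congr rfl fun c _ => faulhaberEntry_self hq1 c,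
      ← qfac_mul_prod_Ico q (by omega : m ≤ k + 1)]
    field_simp
  · rfl

end Faulhaber

lemma RatFunc.X_pow_succ_ne_one (F : Type*) [Field F] (c : ℕ) :
    (RatFunc.X : RatFunc F) ^ (c + 1) ≠ 1 := by
  rw [← RatFunc.algebraMap_X, ← map_pow, Ne, ← map_one (algebraMap (Polynomial F) (RatFunc F)),
    (RatFunc.algebraMap_injective F).eq_iff]
  intro h
  simpa using congrArg Polynomial.natDegree h

/-- over `ℚ(q)`, the lower triangular matrices
`A_{k,m'} = h_{2m'-k}({1,q}^{k-m'+1})` and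
`B_{k,m'} = (-1)^{k-m'} ([m']!/[k+1]!) P_{k,k-m'}(q)` (zero above the diagonal)
are inverse to each other. -/
theorem faulhaber_matrices_inverse (n : ℕ) :
    let q : RatFunc ℚ := RatFunc.X
    let A : Matrix (Fin (n + 1)) (Fin (n + 1)) (RatFunc ℚ) :=
      Matrix.of fun k m' =>
        hz q (((k : ℕ) : ℤ) - (m' : ℕ) + 1) (((k : ℕ) : ℤ) - (m' : ℕ) + 1)
          (2 * ((m' : ℕ) : ℤ) - (k : ℕ))
    let B : Matrix (Fin (n + 1)) (Fin (n + 1)) (RatFunc ℚ) :=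
      Matrix.of fun k m' =>
        if (m' : ℕ) ≤ (k : ℕ) then
          (-1 : RatFunc ℚ) ^ ((k : ℕ) - (m' : ℕ)) * qfac q (m' : ℕ) / qfac q ((k : ℕ) + 1) *
            PdetF q (k : ℕ) ((k : ℕ) - (m' : ℕ))
        else 0
    A * B = 1 ∧ B * A = 1 := by
  intro q A B
  have hq : ∀ c : ℕ, q ^ (c + 1) ≠ 1 := RatFunc.X_pow_succ_ne_one ℚ
  have hB : B = of fun k m : Fin (n + 1) => triangularInv (faulhaberEntry q) k m := by
    ext k m
    exact (triangularInv_faulhaberEntry hq k m).symm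
  have hAB : A * B = 1 := hB ▸ mul_triangularInv (faulhaberEntry q)
    (fun _ _ => faulhaberEntry_of_lt q) (faulhaberEntry_self_ne_zero hq) (n + 1)
  exact ⟨hAB, mul_eq_one_comm.1 hAB⟩
end
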